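/- Under the stated context, let L = ℚ(√−c, √C₁) viewed as a subfield of ℂ with ring of integers O_L, let q be an odd prime dividing C₁, and let 𝔮 be a nonzero prime ideal of O_L lying above q. Then αᵖ ≢ βᵖ (mod 𝔮). -/

import Mathlib

open Polynomial IntermediateField

noncomputable def sqrtneg (c : ℕ) : ℂ := Complex.I * Real.sqrt c

lemma sqrtneg_sq (c : ℕ) : sqrtneg c ^ 2 = -(c : ℂ) := by
  have h : ((Real.sqrt c : ℝ) : ℂ) ^ 2 = (c : ℂ) := by
    rw [← Complex.ofReal_pow, Real.sq_sqrt (by positivity)]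
    norm_num
  simp [sqrtneg, mul_pow, Complex.I_sq, h]

lemma sqrtneg_isIntegral (c : ℕ) : IsIntegral ℚ (sqrtneg c) := by
  refine ⟨X ^ 2 + C (c : ℚ), monic_X_pow_add_C _ two_ne_zero, ?_⟩
  simp [eval₂_add, eval₂_pow, sqrtneg_sq c]

/-- The field `K = ℚ(√-c)`, realised as the subfield of `ℂ` generated by `i·√c`. -/
noncomputable def Kf (c : ℕ) : IntermediateField ℚ ℂ := ℚ⟮sqrtneg c⟯

/-- The class number of `ℚ(√-c)`. -/
noncomputable def classNumberK (c : ℕ) : ℕ :=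
  haveI : FiniteDimensional ℚ (Kf c) :=
    IntermediateField.adjoin.finiteDimensional (sqrtneg_isIntegral c)
  haveI : NumberField (Kf c) := ⟨⟩
  NumberField.classNumber (Kf c)

/-- The field `L = ℚ(√-c, √C₁)`, realised as a subfield of `ℂ`. -/
noncomputable def Lf (c C₁ : ℕ) : IntermediateField ℚ ℂ :=
  IntermediateField.adjoin ℚ {sqrtneg c, (Real.sqrt C₁ : ℂ)}

/-!
Writing `w = C₁x + d√−c`, the hypothesis says `δᵖ = (√C₁)ᵖ⁻¹ w`, so `αᵖ = w / √C₁` and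
`βᵖ = w̄ / √C₁`. Hence `αᵖ − βᵖ = 2d√−c / √C₁`, whose square is `−4d²c / C₁ = −4C₂`.
If `𝔮` contained `αᵖ − βᵖ` it would contain both `q` and `4C₂`, which are coprime integers
because `q` is odd and divides `C₁`.
-/

open ComplexConjugate NumberField

lemma conj_sqrtneg (c : ℕ) : conj (sqrtneg c) = -sqrtneg c := by
  simp [sqrtneg, Complex.conj_I]

lemma div_ofReal_pow_odd {δ w : ℂ} {r : ℝ} {k : ℕ} (hr : r ≠ 0)
    (hδ : δ ^ (2 * k + 1) = (r : ℂ) ^ (2 * k) * w) : (δ / r) ^ (2 * k + 1) = w / r := by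
  have hr' : (r : ℂ) ≠ 0 := Complex.ofReal_ne_zero.mpr hr
  rw [div_pow, hδ, pow_succ, mul_div_mul_left _ _ (pow_ne_zero _ hr')]

lemma conj_div_ofReal_pow_odd {δ w : ℂ} {r : ℝ} {k : ℕ} (hr : r ≠ 0)
    (hδ : δ ^ (2 * k + 1) = (r : ℂ) ^ (2 * k) * w) :
    (conj δ / r) ^ (2 * k + 1) = conj w / r :=
  div_ofReal_pow_odd hr (by rw [← map_pow, hδ, map_mul, map_pow, Complex.conj_ofReal])

lemma RingOfIntegers.coe_complex_injective (L : IntermediateField ℚ ℂ) :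
    Function.Injective fun a : 𝓞 L ↦ ((algebraMap (𝓞 L) L a : L) : ℂ) :=
  Subtype.val_injective.comp RingOfIntegers.coe_injective

lemma sq_div_sqrt_pow_sub_conj {C₁ C₂ c d x k : ℕ} {δ : ℂ} (hC₁pos : 0 < C₁)
    (hfact : C₁ * C₂ = c * d ^ 2)
    (hδ : δ ^ (2 * k + 1) = (C₁ : ℂ) ^ k * (C₁ * x + d * sqrtneg c)) :
    ((δ / Real.sqrt C₁) ^ (2 * k + 1) - (conj δ / Real.sqrt C₁) ^ (2 * k + 1)) ^ 2
      = -((4 * C₂ : ℕ) : ℂ) := by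
  have hsqrt : (Real.sqrt C₁ : ℂ) ^ 2 = C₁ := by
    rw [← Complex.ofReal_pow, Real.sq_sqrt (Nat.cast_nonneg _), Complex.ofReal_natCast]
  have hsqrt_ne : Real.sqrt C₁ ≠ 0 := Real.sqrt_ne_zero'.mpr (by exact_mod_cast hC₁pos)
  rw [show (C₁ : ℂ) ^ k = (Real.sqrt C₁ : ℂ) ^ (2 * k) by rw [pow_mul, hsqrt]] at hδ
  have hdiff : (δ / Real.sqrt C₁) ^ (2 * k + 1) - (conj δ / Real.sqrt C₁) ^ (2 * k + 1)
      = 2 * d * sqrtneg c / Real.sqrt C₁ := by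
    rw [div_ofReal_pow_odd hsqrt_ne hδ, conj_div_ofReal_pow_odd hsqrt_ne hδ]
    simp only [map_add, map_mul, map_natCast, conj_sqrtneg]
    ring
  have hfact' : (C₁ * C₂ : ℂ) = c * d ^ 2 := by exact_mod_cast hfact
  rw [hdiff, div_pow, hsqrt, div_eq_iff (by exact_mod_cast hC₁pos.ne')]
  push_cast
  linear_combination 4 * (d : ℂ) ^ 2 * sqrtneg_sq c + 4 * hfact'

theorem stmt11_general (C₁ C₂ c d : ℕ) (hC₁pos : 0 < C₁)
    (hcop : Nat.gcd C₁ C₂ = 1)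
    (hfact : C₁ * C₂ = c * d ^ 2)
    (p : ℕ) (hpodd : Odd p)
    (x : ℕ)
    (δ : ℂ)
    (hδeq : (C₁ : ℂ) ^ ((p - 1) / 2) * ((C₁ : ℂ) * (x : ℂ) + (d : ℂ) * sqrtneg c) = δ ^ p)
    (α β : ℂ) (hα : α = δ / (Real.sqrt C₁ : ℂ))
    (hβ : β = (starRingEnd ℂ) δ / (Real.sqrt C₁ : ℂ))
    (q : ℕ) (hqodd : Odd q) (hqC₁ : q ∣ C₁)
    (Q : Ideal (NumberField.RingOfIntegers (Lf c C₁)))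
    (hQprime : Q.IsPrime)
    (hQq : (q : NumberField.RingOfIntegers (Lf c C₁)) ∈ Q)
    (A B : NumberField.RingOfIntegers (Lf c C₁))
    (hA : ((algebraMap (NumberField.RingOfIntegers (Lf c C₁)) (Lf c C₁) A : Lf c C₁) : ℂ) = α)
    (hB : ((algebraMap (NumberField.RingOfIntegers (Lf c C₁)) (Lf c C₁) B : Lf c C₁) : ℂ) = β)
    :
    A ^ p - B ^ p ∉ Q := by
  obtain ⟨k, rfl⟩ := hpodd
  rw [Nat.add_sub_cancel, Nat.mul_div_cancel_left _ two_pos] at hδeq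
  have hsq := sq_div_sqrt_pow_sub_conj (C₂ := C₂) hC₁pos hfact hδeq.symm
  rw [← hα, ← hβ] at hsq
  have hsq_int : (A ^ (2 * k + 1) - B ^ (2 * k + 1)) ^ 2 = -((4 * C₂ : ℕ) : 𝓞 (Lf c C₁)) := by
    generalize 4 * C₂ = n at hsq
    exact RingOfIntegers.coe_complex_injective _ (by simp [hA, hB, hsq])
  have hcoprime : q.Coprime (4 * C₂) :=
    Nat.Coprime.mul_right (Nat.Coprime.pow_right 2 hqodd.coprime_two_right)
      (Nat.Coprime.coprime_dvd_left hqC₁ hcop)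
  intro hmem
  refine hQprime.notMem_of_isCoprime_of_mem hcoprime.cast hQq ?_
  have := Q.neg_mem (Q.mul_mem_left (A ^ (2 * k + 1) - B ^ (2 * k + 1)) hmem)
  rwa [← sq, hsq_int, neg_neg] at this

theorem stmt11 (C₁ C₂ c d : ℕ) (hC₁pos : 0 < C₁) (hC₁sqf : Squarefree C₁)
    (hC₂pos : 0 < C₂) (hcop : Nat.gcd C₁ C₂ = 1) (hmod8 : C₁ * C₂ % 8 ≠ 7)
    (hcpos : 0 < c) (hdpos : 0 < d) (hcsqf : Squarefree c)
    (hfact : C₁ * C₂ = c * d ^ 2)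
    (p : ℕ) (hp : p.Prime) (hpodd : Odd p)
    (hpcl : ¬ p ∣ classNumberK c)
    (hp3 : p = 3 → ¬ ∃ m : ℤ, (C₁ : ℤ) * (C₂ : ℤ) = 3 * m ^ 2)
    (x y : ℕ) (hxpos : 0 < x) (hypos : 0 < y)
    (heq : C₁ * x ^ 2 + C₂ = y ^ p)
    (hgcd : Nat.gcd (Nat.gcd (C₁ * x ^ 2) C₂) (y ^ p) = 1)
    (δ : ℂ) (hδK : δ ∈ Kf c) (hδint : IsIntegral ℤ δ)
    (hδeq : (C₁ : ℂ) ^ ((p - 1) / 2) * ((C₁ : ℂ) * (x : ℂ) + (d : ℂ) * sqrtneg c) = δ ^ p)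
    (α β : ℂ) (hα : α = δ / (Real.sqrt C₁ : ℂ))
    (hβ : β = (starRingEnd ℂ) δ / (Real.sqrt C₁ : ℂ))
    (q : ℕ) (hq : q.Prime) (hqodd : Odd q) (hqC₁ : q ∣ C₁)
    (Q : Ideal (NumberField.RingOfIntegers (Lf c C₁)))
    (hQprime : Q.IsPrime) (hQ0 : Q ≠ ⊥)
    (hQq : (q : NumberField.RingOfIntegers (Lf c C₁)) ∈ Q)
    (A B : NumberField.RingOfIntegers (Lf c C₁))
    (hA : ((algebraMap (NumberField.RingOfIntegers (Lf c C₁)) (Lf c C₁) A : Lf c C₁) : ℂ) = α)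
    (hB : ((algebraMap (NumberField.RingOfIntegers (Lf c C₁)) (Lf c C₁) B : Lf c C₁) : ℂ) = β)
    :
    A ^ p - B ^ p ∉ Q :=
  stmt11_general C₁ C₂ c d hC₁pos hcop hfact p hpodd x δ hδeq α β hα hβ q hqodd hqC₁ Q hQprime hQq A
    B hA hB
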